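/- arXiv:1205.3980 — 4 statements merged into one kernel-verified Lean document; each statement's English description precedes it below -/
import Mathlib

section
/- For a finite weighted graph G with edge weights w and vertex weights pi, the smallest nonzero eigenvalue of the combinatorial Laplacian satisfies lambda_1(G) >= h(G)^2 / (2 d_max), where d_max = max over vertices x of (1/pi(x)) * sum over neighbors y of w(x,y). -/
/-!
Co-area argument: if `g ≥ 0` vanishes outside a set of at most half the mass, peeling off the
lowest level set of `g` and charging it to the Cheeger constant gives
`h · ∑ π g ≤ ½ ∑ w |g x - g y|`. Applied to `g = p²`, Cauchy–Schwarz
`(∑ w |p x² - p y²|)² ≤ ∑ w (p x - p y)² · ∑ w (p x + p y)²` and the degree bound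
`∑ w (p x + p y)² ≤ 4 d_max ∑ π p²` turn this into `h² ∑ π p² ≤ d_max ∑ w (p x - p y)²`.
For `f ⟂ 1`, apply that to the positive and negative parts of `f - m` with `m` a weighted median:
centring at `m` only increases `∑ π f²`, and splitting into the two parts only decreases the energy.
-/

open Finset

/-- `lam1 w π` : the smallest nonzero eigenvalue of the combinatorial Laplacian of the
weighted graph with edge weights `w` and vertex weights `π`, given by the minimum
Rayleigh quotient over functions orthogonal to constants. The Dirichlet form
`(1/2)·∑_{x,y} w x y (f x - f y)²` counts each undirected edge once. -/
noncomputable def lam1 {V : Type*} [Fintype V] (w : V → V → ℝ) (π : V → ℝ) : ℝ :=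
  sInf {r : ℝ | ∃ f : V → ℝ, (∑ x, π x * f x) = 0 ∧ f ≠ 0 ∧
    r = ((1 / 2) * ∑ x, ∑ y, w x y * (f x - f y) ^ 2) / (∑ x, π x * f x ^ 2)}

/-- `cheeger w π` : the Cheeger constant, the minimum over sets `S` with
`π(S) ≤ π(V)/2` of (weight of edges leaving `S`) / `π(S)`. -/
noncomputable def cheeger {V : Type*} [Fintype V] [DecidableEq V]
    (w : V → V → ℝ) (π : V → ℝ) : ℝ :=
  sInf {r : ℝ | ∃ S : Finset V, S.Nonempty ∧ (∑ x ∈ S, π x) ≤ (∑ x, π x) / 2 ∧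
    r = (∑ x ∈ S, ∑ y ∈ Sᶜ, w x y) / (∑ x ∈ S, π x)}

theorem sq_posPart_sub_add_sq_negPart_sub_le (a b : ℝ) :
    (a⁺ - b⁺) ^ 2 + (a⁻ - b⁻) ^ 2 ≤ (a - b) ^ 2 := by
  rcases le_total a 0 with ha | ha <;> rcases le_total b 0 with hb | hb <;>
    simp only [posPart_eq_zero.2, negPart_eq_zero.2, posPart_eq_self.2, negPart_eq_neg.2, *] <;>
    nlinarith

theorem sq_posPart_add_sq_negPart (a : ℝ) : a⁺ ^ 2 + a⁻ ^ 2 = a ^ 2 := by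
  rcases le_total a 0 with ha | ha <;>
    simp only [posPart_eq_zero.2, negPart_eq_zero.2, posPart_eq_self.2, negPart_eq_neg.2, ha] <;>
    ring

theorem exists_weighted_median {ι : Type*} [Fintype ι] [Nonempty ι] {π : ι → ℝ}
    (hπ : ∀ x, 0 ≤ π x) (f : ι → ℝ) :
    ∃ m, ∑ x with m < f x, π x ≤ (∑ x, π x) / 2 ∧ ∑ x with f x < m, π x ≤ (∑ x, π x) / 2 := by
  set T := ∑ x, π x
  have hT : 0 ≤ T / 2 := div_nonneg (sum_nonneg fun x _ => hπ x) zero_le_two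
  obtain ⟨z, -, hz⟩ := univ.exists_min_image f univ_nonempty
  have hbelow_z : ∑ y with f y < f z, π y ≤ T / 2 := by
    rwa [filter_false_of_mem fun y _ => not_lt.2 (hz y (mem_univ y)), sum_empty]
  obtain ⟨x₀, hx₀, hmax⟩ := ({x | ∑ y with f y < f x, π y ≤ T / 2} : Finset ι).exists_max_image f
    ⟨z, mem_filter.2 ⟨mem_univ z, hbelow_z⟩⟩
  refine ⟨f x₀, ?_, (mem_filter.1 hx₀).2⟩
  rcases ({x | f x₀ < f x} : Finset ι).eq_empty_or_nonempty with hempty | hne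
  · rwa [hempty, sum_empty]
  obtain ⟨y, hy, hymin⟩ := exists_min_image _ f hne
  have hy_heavy : T / 2 < ∑ x with f x < f y, π x := by
    by_contra! hle
    exact (mem_filter.1 hy).2.not_ge (hmax y (mem_filter.2 ⟨mem_univ y, hle⟩))
  have hsub : ({x | f x₀ < f x} : Finset ι) ⊆ ({x | ¬ f x < f y} : Finset ι) := fun x hx =>
    mem_filter.2 ⟨mem_univ x, not_lt.2 (hymin x hx)⟩
  calc ∑ x with f x₀ < f x, π x ≤ ∑ x with ¬ f x < f y, π x :=
        sum_le_sum_of_subset_of_nonneg hsub fun x _ _ => hπ x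
    _ = T - ∑ x with f x < f y, π x :=
        eq_sub_of_add_eq' (sum_filter_add_sum_filter_not univ (fun x => f x < f y) π)
    _ ≤ T / 2 := by linarith

section WeightedGraph

variable {V : Type*} [Fintype V] (w : V → V → ℝ) (π : V → ℝ)

theorem sum_mul_abs_sub_add_of_comonotone {u v : V → ℝ}
    (huv : ∀ x y, 0 ≤ (u x - u y) * (v x - v y)) :
    ∑ x, ∑ y, w x y * |(u x + v x) - (u y + v y)| =
      ∑ x, ∑ y, w x y * |u x - u y| + ∑ x, ∑ y, w x y * |v x - v y| := by
  rw [← sum_add_distrib]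
  refine sum_congr rfl fun x _ => ?_
  rw [← sum_add_distrib]
  refine sum_congr rfl fun y _ => ?_
  rw [add_sub_add_comm, (abs_add_eq_add_abs_iff _ _).2 (mul_nonneg_iff.1 (huv x y)), mul_add]

theorem sum_mul_sq_posPart_sub_add_le (hw : ∀ x y, 0 ≤ w x y) (u : V → ℝ) :
    ∑ x, ∑ y, w x y * ((u x)⁺ - (u y)⁺) ^ 2 + ∑ x, ∑ y, w x y * ((u x)⁻ - (u y)⁻) ^ 2 ≤
      ∑ x, ∑ y, w x y * (u x - u y) ^ 2 := by
  simp only [← sum_add_distrib, ← mul_add]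
  gcongr with x _ y _
  · exact hw x y
  · exact sq_posPart_sub_add_sq_negPart_sub_le _ _

theorem sq_sum_mul_abs_sq_sub_sq_le (hw : ∀ x y, 0 ≤ w x y) (p : V → ℝ) :
    (∑ x, ∑ y, w x y * |p x ^ 2 - p y ^ 2|) ^ 2 ≤
      (∑ x, ∑ y, w x y * (p x - p y) ^ 2) * ∑ x, ∑ y, w x y * (p x + p y) ^ 2 := by
  simp only [← Fintype.sum_prod_type']
  refine sum_sq_le_sum_mul_sum_of_sq_le_mul _ (fun z _ => mul_nonneg (hw _ _) (sq_nonneg _))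
    (fun z _ => mul_nonneg (hw _ _) (sq_nonneg _)) fun z _ => le_of_eq ?_
  rw [mul_pow, sq_abs]
  ring

theorem sum_mul_add_sq_le (hw_symm : ∀ x y, w x y = w y x) (hw : ∀ x y, 0 ≤ w x y) {d : ℝ}
    (hd : ∀ x, ∑ y, w x y ≤ d * π x) (p : V → ℝ) :
    ∑ x, ∑ y, w x y * (p x + p y) ^ 2 ≤ 4 * d * ∑ x, π x * p x ^ 2 := by
  have hswap : ∑ x, ∑ y, w x y * p y ^ 2 = ∑ x, ∑ y, w x y * p x ^ 2 := by
    rw [sum_comm]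
    exact sum_congr rfl fun x _ => sum_congr rfl fun y _ => by rw [hw_symm]
  calc ∑ x, ∑ y, w x y * (p x + p y) ^ 2
      ≤ ∑ x, ∑ y, (2 * (w x y * p x ^ 2) + 2 * (w x y * p y ^ 2)) := by
        gcongr with x _ y _
        nlinarith [mul_nonneg (hw x y) (sq_nonneg (p x - p y))]
    _ = 4 * ∑ x, (∑ y, w x y) * p x ^ 2 := by
        simp only [sum_add_distrib, ← mul_sum, hswap, sum_mul]
        ring
    _ ≤ 4 * ∑ x, d * π x * p x ^ 2 := by
        gcongr with x
        exact hd x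
    _ = 4 * d * ∑ x, π x * p x ^ 2 := by
        simp only [mul_sum, mul_assoc]

theorem degree_le_sSup_mul (hπ : ∀ x, 0 < π x) (x : V) :
    ∑ y, w x y ≤ sSup {r : ℝ | ∃ x : V, r = (∑ y, w x y) / π x} * π x := by
  have hfin : {r : ℝ | ∃ x : V, r = (∑ y, w x y) / π x}.Finite :=
    (Set.finite_range fun x => (∑ y, w x y) / π x).subset fun _ ⟨x, hx⟩ => ⟨x, hx.symm⟩
  exact (div_le_iff₀ (hπ x)).1 (le_csSup hfin.bddAbove ⟨x, rfl⟩)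

theorem lam1_nonneg (hw : ∀ x y, 0 ≤ w x y) (hπ : ∀ x, 0 ≤ π x) : 0 ≤ lam1 w π := by
  refine Real.sInf_nonneg ?_
  rintro _ ⟨f, -, -, rfl⟩
  exact div_nonneg (mul_nonneg (by norm_num) (sum_nonneg fun x _ => sum_nonneg fun y _ =>
    mul_nonneg (hw x y) (sq_nonneg _))) (sum_nonneg fun x _ => mul_nonneg (hπ x) (sq_nonneg _))

variable [DecidableEq V]

theorem exists_ne_zero_sum_mul_eq_zero [Nontrivial V] (hπ : ∀ x, 0 < π x) :
    ∃ f : V → ℝ, ∑ x, π x * f x = 0 ∧ f ≠ 0 := by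
  obtain ⟨a, b, hab⟩ := exists_pair_ne V
  refine ⟨Pi.single a (π b) - Pi.single b (π a), ?_, fun h => (hπ b).ne' ?_⟩
  · simp [mul_sub, sum_sub_distrib, Pi.single_apply, mul_comm]
  · simpa [hab.symm] using congrFun h a

theorem sum_mul_abs_sub_ite_mem (hw_symm : ∀ x y, w x y = w y x) (S : Finset V) (t : ℝ) :
    ∑ x, ∑ y, w x y * |(if x ∈ S then t else 0) - (if y ∈ S then t else 0)| =
      2 * |t| * ∑ x ∈ S, ∑ y ∈ Sᶜ, w x y := by
  have hin : ∀ x ∈ S, ∑ y, w x y * |(if x ∈ S then t else 0) - (if y ∈ S then t else 0)| =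
      |t| * ∑ y ∈ Sᶜ, w x y := by
    intro x hx
    rw [← sum_add_sum_compl S, sum_eq_zero fun y hy => by simp [hx, hy], zero_add, mul_sum]
    exact sum_congr rfl fun y hy => by simp [hx, mem_compl.1 hy, mul_comm]
  have hout : ∀ x ∈ Sᶜ, ∑ y, w x y * |(if x ∈ S then t else 0) - (if y ∈ S then t else 0)| =
      |t| * ∑ y ∈ S, w x y := by
    intro x hx
    rw [← sum_add_sum_compl S, add_comm,
      sum_eq_zero fun y hy => by simp [mem_compl.1 hx, mem_compl.1 hy], zero_add, mul_sum]
    exact sum_congr rfl fun y hy => by simp [mem_compl.1 hx, hy, mul_comm]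
  have hswap : ∑ x ∈ Sᶜ, ∑ y ∈ S, w x y = ∑ x ∈ S, ∑ y ∈ Sᶜ, w x y := by
    rw [sum_comm]
    exact sum_congr rfl fun x _ => sum_congr rfl fun y _ => hw_symm y x
  rw [← sum_add_sum_compl S, sum_congr rfl hin, sum_congr rfl hout, ← mul_sum, ← mul_sum, hswap]
  ring

theorem cut_div_mass_nonneg (hw : ∀ x y, 0 ≤ w x y) (hπ : ∀ x, 0 ≤ π x) (S : Finset V) :
    0 ≤ (∑ x ∈ S, ∑ y ∈ Sᶜ, w x y) / ∑ x ∈ S, π x :=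
  div_nonneg (sum_nonneg fun x _ => sum_nonneg fun y _ => hw x y) (sum_nonneg fun x _ => hπ x)

theorem cheeger_nonneg (hw : ∀ x y, 0 ≤ w x y) (hπ : ∀ x, 0 ≤ π x) : 0 ≤ cheeger w π :=
  Real.sInf_nonneg fun _ ⟨S, _, _, hr⟩ => hr ▸ cut_div_mass_nonneg w π hw hπ S

theorem cheeger_mul_le_cut (hw : ∀ x y, 0 ≤ w x y) (hπ : ∀ x, 0 < π x) {S : Finset V}
    (hS : S.Nonempty) (hhalf : ∑ x ∈ S, π x ≤ (∑ x, π x) / 2) :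
    cheeger w π * ∑ x ∈ S, π x ≤ ∑ x ∈ S, ∑ y ∈ Sᶜ, w x y := by
  refine (le_div_iff₀ (sum_pos (fun x _ => hπ x) hS)).1 (csInf_le ⟨0, ?_⟩ ⟨S, hS, hhalf, rfl⟩)
  rintro _ ⟨T, -, -, rfl⟩
  exact cut_div_mass_nonneg w π hw (fun x => (hπ x).le) T

-- No nonempty `S` has at most half of a positive total mass, so this is `sInf ∅ = 0`.
theorem cheeger_eq_zero_of_subsingleton [Subsingleton V] (hπ : ∀ x, 0 < π x) :
    cheeger w π = 0 := by
  rw [cheeger, Set.eq_empty_of_forall_notMem (s := {r : ℝ | _}), Real.sInf_empty]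
  rintro _ ⟨S, ⟨x, hx⟩, hhalf, -⟩
  rw [show S = univ from eq_univ_of_forall fun y => Subsingleton.elim x y ▸ hx] at hhalf
  linarith [sum_pos (fun x _ => hπ x) ⟨x, mem_univ x⟩]

theorem cheeger_mul_sum_le_variation (hw_symm : ∀ x y, w x y = w y x) (hw : ∀ x y, 0 ≤ w x y)
    (hπ : ∀ x, 0 < π x) (S : Finset V) (hS : ∑ x ∈ S, π x ≤ (∑ x, π x) / 2) (g : V → ℝ)
    (hg : ∀ x, 0 ≤ g x) (hgS : ∀ x ∉ S, g x = 0) :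
    cheeger w π * ∑ x, π x * g x ≤ (1 / 2) * ∑ x, ∑ y, w x y * |g x - g y| := by
  induction S using Finset.strongInduction generalizing g with
  | H S ih =>
  rcases S.eq_empty_or_nonempty with rfl | hne
  · simp [funext fun x => hgS x (notMem_empty x)]
  obtain ⟨x₀, hx₀, hmin⟩ := S.exists_min_image g hne
  set t := g x₀
  set v : V → ℝ := fun x => if x ∈ S then t else 0
  set g' : V → ℝ := fun x => g x - v x
  have hg' : ∀ x, 0 ≤ g' x := fun x => by
    by_cases hx : x ∈ S <;> simp [g', v, hx, hmin x, hg x]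
  have hg'S : ∀ x ∉ S.erase x₀, g' x = 0 := fun x hx => by
    by_cases hxS : x ∈ S
    · simp [g', v, hx₀, show x = x₀ by simpa [hxS] using hx, t]
    · simp [g', v, hxS, hgS x hxS]
  have ht : 0 ≤ t := hg x₀
  have hcomono : ∀ x y, 0 ≤ (g' x - g' y) * (v x - v y) := fun x y => by
    by_cases hx : x ∈ S <;> by_cases hy : y ∈ S
    · simp [v, hx, hy]
    · simpa [g', v, hx, hy, hgS y hy] using mul_nonneg (sub_nonneg.2 (hmin x hx)) ht
    · simp only [g', v, hx, hy, hgS x hx, if_true, if_false]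
      nlinarith [mul_nonneg (sub_nonneg.2 (hmin y hy)) ht]
    · simp [v, hx, hy]
  have hmass : ∑ x, π x * g x = ∑ x, π x * g' x + t * ∑ x ∈ S, π x := by
    simp [g', v, mul_sub, sum_sub_distrib, mul_sum, mul_comm]
  have hvar : ∑ x, ∑ y, w x y * |g x - g y| =
      ∑ x, ∑ y, w x y * |g' x - g' y| + 2 * t * ∑ x ∈ S, ∑ y ∈ Sᶜ, w x y := by
    have hsplit := sum_mul_abs_sub_add_of_comonotone w hcomono
    simp only [g', v, sub_add_cancel] at hsplit
    rw [hsplit, sum_mul_abs_sub_ite_mem w hw_symm S t, abs_of_nonneg ht]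
  have hrest := ih (S.erase x₀) (erase_ssubset hx₀)
    ((sum_le_sum_of_subset_of_nonneg (erase_subset x₀ S) fun x _ _ => (hπ x).le).trans hS)
    g' hg' hg'S
  have hcut := mul_le_mul_of_nonneg_left (cheeger_mul_le_cut w π hw hπ hne hS) ht
  rw [hmass, hvar]
  linarith

theorem cheeger_sq_mul_le_energy_of_supported (hw_symm : ∀ x y, w x y = w y x)
    (hw : ∀ x y, 0 ≤ w x y) (hπ : ∀ x, 0 < π x) {d : ℝ} (hd0 : 0 ≤ d)
    (hd : ∀ x, ∑ y, w x y ≤ d * π x) (S : Finset V) (hS : ∑ x ∈ S, π x ≤ (∑ x, π x) / 2)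
    (p : V → ℝ) (hpS : ∀ x ∉ S, p x = 0) :
    cheeger w π ^ 2 * ∑ x, π x * p x ^ 2 ≤ d * ∑ x, ∑ y, w x y * (p x - p y) ^ 2 := by
  set Q := ∑ x, π x * p x ^ 2
  set E := ∑ x, ∑ y, w x y * (p x - p y) ^ 2
  set A := ∑ x, ∑ y, w x y * |p x ^ 2 - p y ^ 2|
  have hQ : 0 ≤ Q := sum_nonneg fun x _ => mul_nonneg (hπ x).le (sq_nonneg _)
  have hE : 0 ≤ E := sum_nonneg fun x _ => sum_nonneg fun y _ => mul_nonneg (hw x y) (sq_nonneg _)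
  have hh : 0 ≤ cheeger w π * Q := mul_nonneg (cheeger_nonneg w π hw fun x => (hπ x).le) hQ
  have hcoarea : cheeger w π * Q ≤ (1 / 2) * A :=
    cheeger_mul_sum_le_variation w π hw_symm hw hπ S hS (fun x => p x ^ 2) (fun x => sq_nonneg _)
      fun x hx => by simp [hpS x hx]
  have hA : A ^ 2 ≤ E * (4 * d * Q) := (sq_sum_mul_abs_sq_sub_sq_le w hw p).trans
    (mul_le_mul_of_nonneg_left (sum_mul_add_sq_le w π hw_symm hw hd p) hE)
  have hsq : (cheeger w π ^ 2 * Q) * Q ≤ (d * E) * Q := by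
    nlinarith [pow_le_pow_left₀ hh hcoarea 2]
  rcases hQ.eq_or_lt with hQ0 | hQpos
  · rw [← hQ0, mul_zero]
    exact mul_nonneg hd0 hE
  · exact le_of_mul_le_mul_right hsq hQpos

theorem cheeger_sq_mul_le_energy [Nonempty V] (hw_symm : ∀ x y, w x y = w y x)
    (hw : ∀ x y, 0 ≤ w x y) (hπ : ∀ x, 0 < π x) {d : ℝ} (hd0 : 0 ≤ d)
    (hd : ∀ x, ∑ y, w x y ≤ d * π x) (f : V → ℝ) (hf : ∑ x, π x * f x = 0) :
    cheeger w π ^ 2 * ∑ x, π x * f x ^ 2 ≤ d * ∑ x, ∑ y, w x y * (f x - f y) ^ 2 := by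
  obtain ⟨m, hup, hdown⟩ := exists_weighted_median (fun x => (hπ x).le) f
  have hpos := cheeger_sq_mul_le_energy_of_supported w π hw_symm hw hπ hd0 hd _ hup
    (fun x => (f x - m)⁺) fun x hx => posPart_eq_zero.2 (by simpa using hx)
  have hneg := cheeger_sq_mul_le_energy_of_supported w π hw_symm hw hπ hd0 hd _ hdown
    (fun x => (f x - m)⁻) fun x hx => negPart_eq_zero.2 (by simpa using hx)
  have hparts := sum_mul_sq_posPart_sub_add_le w hw fun x => f x - m
  simp only [sub_sub_sub_cancel_right] at hparts
  have hcentre : ∑ x, π x * f x ^ 2 ≤ ∑ x, π x * (f x - m)⁺ ^ 2 + ∑ x, π x * (f x - m)⁻ ^ 2 := by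
    have hexpand : ∑ x, π x * (f x - m) ^ 2 =
        ∑ x, π x * f x ^ 2 - 2 * m * ∑ x, π x * f x + m ^ 2 * ∑ x, π x := by
      simp only [mul_sum, ← sum_sub_distrib, ← sum_add_distrib]
      exact sum_congr rfl fun x _ => by ring
    simp only [← sum_add_distrib, ← mul_add, sq_posPart_add_sq_negPart]
    rw [hexpand, hf, mul_zero, sub_zero]
    exact le_add_of_nonneg_right (mul_nonneg (sq_nonneg m) (sum_nonneg fun x _ => (hπ x).le))
  calc cheeger w π ^ 2 * ∑ x, π x * f x ^ 2
      ≤ cheeger w π ^ 2 * (∑ x, π x * (f x - m)⁺ ^ 2 + ∑ x, π x * (f x - m)⁻ ^ 2) :=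
        mul_le_mul_of_nonneg_left hcentre (sq_nonneg _)
    _ ≤ d * ∑ x, ∑ y, w x y * (f x - f y) ^ 2 := by
        nlinarith [mul_le_mul_of_nonneg_left hparts hd0]

end WeightedGraph

theorem cheeger_inequality_general {V : Type*} [Fintype V] [DecidableEq V]
    (w : V → V → ℝ) (π : V → ℝ)
    (hw_symm : ∀ x y, w x y = w y x) (hw_nonneg : ∀ x y, 0 ≤ w x y)
    (hπ_pos : ∀ x, 0 < π x)
    (dmax : ℝ) (hdmax : dmax = sSup {r : ℝ | ∃ x : V, r = (∑ y, w x y) / π x})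
    (hdmax_pos : 0 < dmax) :
    lam1 w π ≥ (cheeger w π) ^ 2 / (2 * dmax) := by
  have hdeg : ∀ x, ∑ y, w x y ≤ dmax * π x := hdmax ▸ degree_le_sSup_mul w π hπ_pos
  rcases subsingleton_or_nontrivial V with hV | hV
  · rw [cheeger_eq_zero_of_subsingleton w π hπ_pos, zero_pow two_ne_zero, zero_div]
    exact lam1_nonneg w π hw_nonneg fun x => (hπ_pos x).le
  obtain ⟨f₀, hf₀, hf₀_ne⟩ := exists_ne_zero_sum_mul_eq_zero π hπ_pos
  refine le_csInf ⟨_, f₀, hf₀, hf₀_ne, rfl⟩ ?_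
  rintro _ ⟨f, hf, hf_ne, rfl⟩
  obtain ⟨x, hx⟩ := Function.ne_iff.1 hf_ne
  have hQ : 0 < ∑ x, π x * f x ^ 2 := sum_pos' (fun y _ => mul_nonneg (hπ_pos y).le (sq_nonneg _))
    ⟨x, mem_univ x, mul_pos (hπ_pos x) (sq_pos_of_ne_zero hx)⟩
  have key := cheeger_sq_mul_le_energy w π hw_symm hw_nonneg hπ_pos hdmax_pos.le hdeg f hf
  rw [div_le_div_iff₀ (by positivity) hQ]
  linarith

/-- Discrete Cheeger inequality: `λ₁(G) ≥ h(G)² / (2 d_max)` where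
`d_max = max_x (∑_y w x y) / π x`. -/
theorem cheeger_inequality {V : Type*} [Fintype V] [DecidableEq V] [Nonempty V]
    (w : V → V → ℝ) (π : V → ℝ)
    (hw_symm : ∀ x y, w x y = w y x) (hw_nonneg : ∀ x y, 0 ≤ w x y)
    (hπ_pos : ∀ x, 0 < π x)
    (dmax : ℝ) (hdmax : dmax = sSup {r : ℝ | ∃ x : V, r = (∑ y, w x y) / π x})
    (hdmax_pos : 0 < dmax) :
    lam1 w π ≥ (cheeger w π) ^ 2 / (2 * dmax) :=
  cheeger_inequality_general w π hw_symm hw_nonneg hπ_pos dmax hdmax hdmax_pos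
end

section
/- For any function f: {1,...,n} -> R with mean m = (1/n) * sum_i f(i), one has sum_{i=1}^{n-1} (f(i)-f(i+1))^2 >= (1/n^2) * sum_{i=1}^n (f(i)-m)^2. -/
/-!
Telescoping along the path and Cauchy–Schwarz give `(f i - f 0)² ≤ i · E ≤ n · E`, where `E` is the
Dirichlet energy. Since the mean minimizes `c ↦ ∑ (f i - c)²`, the variance sum is at most
`∑ (f i - f 0)² ≤ n² · E`.
-/

open Finset

variable {R : Type*} [Field R] [LinearOrder R] [IsStrictOrderedRing R]

theorem Finset.sum_sq_sub_mean_le_sum_sq_sub {ι : Type*} (s : Finset ι) (f : ι → R) (c : R) :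
    ∑ i ∈ s, (f i - (∑ j ∈ s, f j) / #s) ^ 2 ≤ ∑ i ∈ s, (f i - c) ^ 2 := by
  rcases s.eq_empty_or_nonempty with rfl | hs
  · simp
  set m := (∑ j ∈ s, f j) / #s
  have hm : #s * m = ∑ j ∈ s, f j := mul_div_cancel₀ _ (by simpa using hs.ne_empty)
  have hgap : ∑ i ∈ s, (f i - c) ^ 2 - ∑ i ∈ s, (f i - m) ^ 2 = #s * (m - c) ^ 2 := by
    calc ∑ i ∈ s, (f i - c) ^ 2 - ∑ i ∈ s, (f i - m) ^ 2
        = ∑ i ∈ s, (m - c) * (2 * f i - m - c) := by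
          rw [← sum_sub_distrib]; exact sum_congr rfl fun i _ => by ring
      _ = (m - c) * (2 * (#s * m) - #s * m - #s * c) := by
          rw [← mul_sum, sum_sub_distrib, sum_sub_distrib, ← mul_sum, sum_const, sum_const,
            nsmul_eq_mul, nsmul_eq_mul, hm]
      _ = #s * (m - c) ^ 2 := by ring
  nlinarith [mul_nonneg (Nat.cast_nonneg (α := R) #s) (sq_nonneg (m - c))]

theorem sq_sub_le_mul_sum_range_sq_sub_succ (f : ℕ → R) (i : ℕ) :
    (f 0 - f i) ^ 2 ≤ i * ∑ k ∈ range i, (f k - f (k + 1)) ^ 2 := by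
  rw [← sum_range_sub']
  simpa using sq_sum_le_card_mul_sum_sq (s := range i) (f := fun k => f k - f (k + 1))

theorem path_poincare_general (n : ℕ) (f : ℕ → ℝ)
    (m : ℝ) (hm : m = (1 / (n : ℝ)) * ∑ i ∈ Finset.range n, f i) :
    ∑ i ∈ Finset.range (n - 1), (f i - f (i + 1)) ^ 2
      ≥ (1 / (n : ℝ) ^ 2) * ∑ i ∈ Finset.range n, (f i - m) ^ 2 := by
  set E := ∑ i ∈ range (n - 1), (f i - f (i + 1)) ^ 2
  have hE : 0 ≤ E := sum_nonneg fun _ _ => sq_nonneg _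
  have hpoint : ∀ i ∈ range n, (f i - f 0) ^ 2 ≤ n * E := by
    intro i hi
    have hin : i ≤ n - 1 := Nat.le_sub_one_of_lt (mem_range.mp hi)
    calc (f i - f 0) ^ 2 = (f 0 - f i) ^ 2 := by ring
      _ ≤ i * ∑ k ∈ range i, (f k - f (k + 1)) ^ 2 := sq_sub_le_mul_sum_range_sq_sub_succ f i
      _ ≤ n * E :=
        mul_le_mul (by exact_mod_cast (mem_range.mp hi).le)
          (sum_le_sum_of_subset_of_nonneg (range_mono hin) fun _ _ _ => sq_nonneg _)
          (sum_nonneg fun _ _ => sq_nonneg _) n.cast_nonneg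
  have hvar : ∑ i ∈ range n, (f i - m) ^ 2 ≤ n ^ 2 * E := by
    calc ∑ i ∈ range n, (f i - m) ^ 2 ≤ ∑ i ∈ range n, (f i - f 0) ^ 2 := by
          simpa [hm, div_eq_inv_mul] using sum_sq_sub_mean_le_sum_sq_sub (range n) f (f 0)
      _ ≤ ∑ _i ∈ range n, n * E := sum_le_sum hpoint
      _ = n ^ 2 * E := by rw [sum_const, card_range, nsmul_eq_mul]; ring
  rw [ge_iff_le, one_div]
  exact inv_mul_le_of_le_mul₀ (by positivity) hE hvar

/-- Discrete Poincaré inequality for the path on `n` vertices: for any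
`f : {0,…,n-1} → ℝ` with mean `m`, the Dirichlet energy over path edges
dominates `1/n²` times the variance. -/
theorem path_poincare (n : ℕ) (hn : 0 < n) (f : ℕ → ℝ)
    (m : ℝ) (hm : m = (1 / (n : ℝ)) * ∑ i ∈ Finset.range n, f i) :
    ∑ i ∈ Finset.range (n - 1), (f i - f (i + 1)) ^ 2
      ≥ (1 / (n : ℝ) ^ 2) * ∑ i ∈ Finset.range n, (f i - m) ^ 2 :=
  path_poincare_general n f m hm
end

section
/- Let Q_h be the weighted graph with vertex set {0,1,...,h}, edge weights w(j,j+1)=2^{j+1}, and vertex weights pi(j)=2^j. Then for every function g: {0,...,h} -> R with sum_{j=0}^h 2^j g(j) = 0, one has sum_{j=0}^{h-1} 2^{j+1} (g(j)-g(j+1))^2 >= (1/6) * sum_{j=0}^h 2^j g(j)^2. -/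
open Finset

/-!
A mean-zero function minimises `c ↦ ∑ 2^j (g(j) - c)²`, so it suffices to bound this sum at
`c = g(h)`, a discrete Hardy inequality. Write `d_k = g(k) - g(k+1)`; then `g(j) - g(h)` is the sum
of the `d_k` with `j ≤ k < h`, and Cauchy–Schwarz with the auxiliary weights `(3/4)^k` gives
`2^j (g(j) - g(h))² ≤ 4 (3/2)^j ∑_{j ≤ k < h} (4/3)^k d_k²`. After exchanging the sums, `d_k²`
carries the weight `4 (4/3)^k ∑_{j ≤ k} (3/2)^j ≤ 12 · 2^k = 6 · 2^(k+1)`.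
-/

theorem sum_mul_sq_le_sum_mul_sub_sq {ι : Type*} (s : Finset ι) {w : ι → ℝ}
    (hw : ∀ i ∈ s, 0 ≤ w i) {g : ι → ℝ} (hmean : ∑ i ∈ s, w i * g i = 0) (c : ℝ) :
    ∑ i ∈ s, w i * g i ^ 2 ≤ ∑ i ∈ s, w i * (g i - c) ^ 2 := by
  have expand : ∑ i ∈ s, w i * (g i - c) ^ 2
      = ∑ i ∈ s, w i * g i ^ 2 - 2 * c * ∑ i ∈ s, w i * g i + c ^ 2 * ∑ i ∈ s, w i := by
    simp only [mul_sum, ← sum_sub_distrib, ← sum_add_distrib]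
    exact sum_congr rfl fun i _ => by ring
  have : 0 ≤ c ^ 2 * ∑ i ∈ s, w i := mul_nonneg (sq_nonneg c) (sum_nonneg hw)
  rw [expand, hmean]
  linarith

theorem geom_sum_le_of_one_lt {x : ℝ} (hx : 1 < x) (n : ℕ) :
    ∑ i ∈ range n, x ^ i ≤ x ^ n / (x - 1) := by
  rw [le_div_iff₀ (sub_pos.mpr hx), geom_sum_mul]
  linarith

theorem sum_Ico_sub_succ (g : ℕ → ℝ) {j h : ℕ} (hjh : j ≤ h) :
    ∑ k ∈ Ico j h, (g k - g (k + 1)) = g j - g h := by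
  rw [← neg_sub (g h), ← sum_Ico_sub g hjh, ← sum_neg_distrib]
  simp only [neg_sub]

theorem sq_sub_le_sum_mul_sum_sq_sub_div (g : ℕ → ℝ) {a : ℕ → ℝ} {j h : ℕ} (hjh : j ≤ h)
    (ha : ∀ k ∈ Ico j h, 0 < a k) :
    (g j - g h) ^ 2 ≤ (∑ k ∈ Ico j h, a k) * ∑ k ∈ Ico j h, (g k - g (k + 1)) ^ 2 / a k := by
  rw [← sum_Ico_sub_succ g hjh]
  refine sum_sq_le_sum_mul_sum_of_sq_le_mul _ (fun k hk => (ha k hk).le)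
    (fun k hk => div_nonneg (sq_nonneg _) (ha k hk).le) fun k hk => ?_
  rw [mul_div_cancel₀ _ (ha k hk).ne']

theorem two_pow_mul_sq_sub_le (g : ℕ → ℝ) {j h : ℕ} (hjh : j ≤ h) :
    (2 : ℝ) ^ j * (g j - g h) ^ 2 ≤
      ∑ k ∈ Ico j h, 4 * (3 / 2 : ℝ) ^ j * ((4 / 3) ^ k * (g k - g (k + 1)) ^ 2) := by
  have cauchy_schwarz := sq_sub_le_sum_mul_sum_sq_sub_div g (a := fun k => (3 / 4 : ℝ) ^ k) hjh
    fun k _ => by positivity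
  have geom : ∑ k ∈ Ico j h, (3 / 4 : ℝ) ^ k ≤ 4 * (3 / 4) ^ j := by
    have := geom_sum_Ico_le_of_lt_one (m := j) (n := h) (x := (3 / 4 : ℝ)) (by norm_num)
      (by norm_num)
    norm_num at this ⊢
    linarith
  have hd : ∀ k, (g k - g (k + 1)) ^ 2 / (3 / 4 : ℝ) ^ k = (4 / 3) ^ k * (g k - g (k + 1)) ^ 2 :=
    fun k => by rw [div_eq_inv_mul, ← inv_pow]; norm_num
  simp only [hd] at cauchy_schwarz
  calc (2 : ℝ) ^ j * (g j - g h) ^ 2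
      ≤ 2 ^ j * (4 * (3 / 4) ^ j * ∑ k ∈ Ico j h, (4 / 3 : ℝ) ^ k * (g k - g (k + 1)) ^ 2) := by
        gcongr
        exact cauchy_schwarz.trans
          (mul_le_mul_of_nonneg_right geom (sum_nonneg fun k _ => by positivity))
    _ = _ := by
        rw [mul_sum, mul_sum]
        refine sum_congr rfl fun k _ => ?_
        rw [show (3 / 2 : ℝ) ^ j = 2 ^ j * (3 / 4) ^ j by rw [← mul_pow]; norm_num]
        ring

theorem sum_two_pow_mul_sq_sub_last_le (h : ℕ) (g : ℕ → ℝ) :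
    ∑ j ∈ range (h + 1), (2 : ℝ) ^ j * (g j - g h) ^ 2 ≤
      6 * ∑ k ∈ range h, (2 : ℝ) ^ (k + 1) * (g k - g (k + 1)) ^ 2 := by
  set d : ℕ → ℝ := fun k => (4 / 3 : ℝ) ^ k * (g k - g (k + 1)) ^ 2
  calc ∑ j ∈ range (h + 1), (2 : ℝ) ^ j * (g j - g h) ^ 2
      ≤ ∑ j ∈ range (h + 1), ∑ k ∈ Ico j h, 4 * (3 / 2 : ℝ) ^ j * d k :=
        sum_le_sum fun j hj => two_pow_mul_sq_sub_le g (Nat.lt_succ_iff.mp (mem_range.mp hj))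
    _ = ∑ k ∈ range h, (4 * ∑ j ∈ range (k + 1), (3 / 2 : ℝ) ^ j) * d k := by
        rw [sum_range_succ, Ico_self, sum_empty, add_zero, range_eq_Ico, sum_Ico_Ico_comm]
        simp only [← range_eq_Ico, mul_sum, sum_mul]
    _ ≤ ∑ k ∈ range h, (4 * ((3 / 2 : ℝ) ^ (k + 1) / (3 / 2 - 1))) * d k := by
        gcongr with k
        exact geom_sum_le_of_one_lt (by norm_num) _
    _ = 6 * ∑ k ∈ range h, (2 : ℝ) ^ (k + 1) * (g k - g (k + 1)) ^ 2 := by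
        rw [mul_sum]
        refine sum_congr rfl fun k _ => ?_
        have : (2 : ℝ) ^ k = (3 / 2) ^ k * (4 / 3) ^ k := by rw [← mul_pow]; norm_num
        simp only [d, pow_succ, this]
        ring

/-- Spectral gap lower bound `λ₁(Q_h) ≥ 1/6` for the weighted path `Q_h`
(vertices `{0,…,h}`, edge weights `2^(j+1)`, vertex weights `2^j`), stated as a
functional inequality: every `g` with `∑_j 2^j g(j) = 0` satisfies
`∑_{j<h} 2^(j+1) (g(j)-g(j+1))² ≥ (1/6) ∑_j 2^j g(j)²`. -/
theorem Qh_gap (h : ℕ) (g : ℕ → ℝ)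
    (hmean : ∑ j ∈ Finset.range (h + 1), (2 : ℝ) ^ j * g j = 0) :
    ∑ j ∈ Finset.range h, (2 : ℝ) ^ (j + 1) * (g j - g (j + 1)) ^ 2
      ≥ (1 / 6) * ∑ j ∈ Finset.range (h + 1), (2 : ℝ) ^ j * g j ^ 2 := by
  have centring := sum_mul_sq_le_sum_mul_sub_sq _ (fun j _ => by positivity) hmean (g h)
  have hardy := sum_two_pow_mul_sq_sub_last_le h g
  linarith
end

section
/- The graph hat T_{h,k}, obtained from the complete rooted binary tree of height h by subdividing every edge into k edges and then adding a path through the vertices of each depth level in in-order traversal order, is planar. -/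
/-!
`hatT h k` is the planar graph of Lee–Qin: the complete rooted binary tree of
height `h`, with every edge subdivided into `k` edges, and with a path added
through the vertices of each depth level in left-to-right (in-order traversal)
order.

Encoding: a vertex is a pair `(d, i)` where `d ≤ hk` is the depth and `i` is
the left-to-right position at depth `d`.  There are `2^⌈d/k⌉` vertices at depth
`d`: for `d = jk` these are the tree vertices at level `j` (in in-order, i.e.
left-to-right, order), and for `jk < d < (j+1)k` these are the `2^(j+1)`
subdivision vertices lying on the `2^(j+1)` tree edges from level `j` to level
`j+1`, ordered left to right.
-/

/-- Vertices of `hatT h k`: pairs (depth `d ≤ hk`, position `i < 2^⌈d/k⌉`). -/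
def VhatT (h k : ℕ) : Type := Σ d : Fin (h * k + 1), Fin (2 ^ ((d.1 + k - 1) / k))

/-- One directed step of adjacency in `hatT h k`: either a horizontal edge of a
level path (same depth, consecutive positions), or a vertical (subdivided tree)
edge from depth `d` to depth `d+1`: at a tree vertex (`d ≡ 0 mod k`) the two
outgoing tree edges go to positions `2i` and `2i+1`, while at a subdivision
vertex (`d ≢ 0 mod k`) the edge continues to the same position below. -/
def hatStep (k : ℕ) {h : ℕ} (u v : VhatT h k) : Prop :=
  ((u.1 : ℕ) = (v.1 : ℕ) ∧ (u.2 : ℕ) + 1 = (v.2 : ℕ)) ∨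
  ((u.1 : ℕ) + 1 = (v.1 : ℕ) ∧
    (((u.1 : ℕ) % k = 0 ∧ ((v.2 : ℕ) = 2 * (u.2 : ℕ) ∨ (v.2 : ℕ) = 2 * (u.2 : ℕ) + 1)) ∨
     ((u.1 : ℕ) % k ≠ 0 ∧ (v.2 : ℕ) = (u.2 : ℕ))))

/-- The graph `hatT h k`. -/
def hatT (h k : ℕ) : SimpleGraph (VhatT h k) where
  Adj u v := hatStep k u v ∨ hatStep k v u
  symm := ⟨fun u v hv => hv.symm⟩
  loopless := ⟨fun u hu => by
    rcases hu with (⟨_, h2⟩ | ⟨h1, _⟩) | (⟨_, h2⟩ | ⟨h1, _⟩) <;> omega⟩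

/-- A graph is planar if it admits a drawing in the plane: an injective
placement of the vertices together with an arc for each edge joining the images
of its endpoints, such that each arc is simple, two arcs of distinct edges meet
only in common endpoints, and no arc passes through the image of a third
vertex. -/
def SimpleGraph.IsPlanar {V : Type*} (G : SimpleGraph V) : Prop :=
  ∃ (pos : V → ℝ × ℝ) (arc : ∀ u v : V, G.Adj u v → _root_.Path (pos u) (pos v)),
    Function.Injective pos ∧
    (∀ u v (h : G.Adj u v), Function.Injective (arc u v h)) ∧
    (∀ u v (h : G.Adj u v) (w z : V) (h' : G.Adj w z), s(u, v) ≠ s(w, z) →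
      Set.range (arc u v h) ∩ Set.range (arc w z h') ⊆
        ({pos u, pos v} ∩ {pos w, pos z} : Set (ℝ × ℝ))) ∧
    (∀ u v (h : G.Adj u v) (x : V), pos x ∈ Set.range (arc u v h) → x = u ∨ x = v)

/-!
Draw the vertex `(d, i)` at the point `(i, d)` and every edge as a straight segment. An edge of a
level path joins two consecutive points of one horizontal line, so it meets the rest of the
drawing only in vertices. Every other edge joins consecutive levels, and two segments crossing
the same band `d ≤ y ≤ d + 1` can only meet away from their endpoints if the order of their
endpoints is reversed between the two levels. That never happens: an edge from depth `d` ending at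
index `i` at depth `d + 1` starts at index `i / 2` or `i`, a monotone function of `i`.
-/

open Set Convex

theorem SimpleGraph.isPlanar_of_segments {V : Type*} (G : SimpleGraph V) (R : V → V → Prop)
    (hR : ∀ u v, G.Adj u v → R u v ∨ R v u) (pos : V → ℝ × ℝ) (hpos : Function.Injective pos)
    (hmeet : ∀ u v w z, R u v → R w z → s(u, v) ≠ s(w, z) →
      [pos u -[ℝ] pos v] ∩ [pos w -[ℝ] pos z] ⊆ {pos u, pos v} ∩ {pos w, pos z})
    (hthrough : ∀ u v y, R u v → pos y ∈ [pos u -[ℝ] pos v] → y = u ∨ y = v) :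
    G.IsPlanar := by
  have orient : ∀ u v, G.Adj u v → ∃ a b, R a b ∧ s(a, b) = s(u, v) := fun u v huv =>
    (hR u v huv).elim (fun h => ⟨u, v, h, rfl⟩) (fun h => ⟨v, u, h, Sym2.eq_swap⟩)
  have congr_edge : ∀ {a b u v : V}, s(a, b) = s(u, v) → [pos a -[ℝ] pos b] = [pos u -[ℝ] pos v] ∧
      ({pos a, pos b} : Set (ℝ × ℝ)) = {pos u, pos v} := by
    intro a b u v h
    rcases Sym2.eq_iff.mp h with ⟨rfl, rfl⟩ | ⟨rfl, rfl⟩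
    · exact ⟨rfl, rfl⟩
    · exact ⟨segment_symm _ _ _, pair_comm _ _⟩
  refine ⟨pos, fun u v _ => Path.segment (pos u) (pos v), hpos,
    fun u v huv => Path.segment_injective_of_ne (hpos.ne huv.ne), ?_, ?_⟩
  · intro u v huv w z hwz hne
    obtain ⟨a, b, hab, he⟩ := orient u v huv
    obtain ⟨c, d, hcd, he'⟩ := orient w z hwz
    simp only [Path.range_segment, ← (congr_edge he).1, ← (congr_edge he).2,
      ← (congr_edge he').1, ← (congr_edge he').2]
    exact hmeet a b c d hab hcd (he ▸ he' ▸ hne)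
  · intro u v huv y hy
    obtain ⟨a, b, hab, he⟩ := orient u v huv
    rw [Path.range_segment, ← (congr_edge he).1] at hy
    rw [← Sym2.mem_iff, ← he, Sym2.mem_iff]
    exact hthrough a b y hab hy

namespace LayeredDrawing

variable {V : Type*} (ℓ : V → ℕ) (x : V → ℝ)

def layerPos (v : V) : ℝ × ℝ := (x v, ℓ v)

def IsLevelNeighbor (u v : V) : Prop :=
  ℓ u = ℓ v ∧ x u < x v ∧ ∀ w, ℓ w = ℓ u → x w ∈ Icc (x u) (x v) → w = u ∨ w = v

def IsLayerStep (u v : V) : Prop := IsLevelNeighbor ℓ x u v ∨ ℓ v = ℓ u + 1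

variable {ℓ x} {u v w y z : V} {p : ℝ × ℝ}

lemma eq_of_layerPos (hpos : Function.Injective (layerPos ℓ x)) (hℓ : ℓ u = ℓ v)
    (hx : x u = x v) : u = v :=
  hpos (by rw [layerPos, layerPos, hℓ, hx])

lemma IsLevelNeighbor.mem_segment (huv : IsLevelNeighbor ℓ x u v)
    (hp : p ∈ [layerPos ℓ x u -[ℝ] layerPos ℓ x v]) : p.2 = ℓ u ∧ p.1 ∈ Icc (x u) (x v) := by
  obtain ⟨h1, h2⟩ := Prod.segment_subset _ _ hp
  simp only [layerPos, ← huv.1, segment_same, mem_singleton_iff,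
    segment_eq_Icc huv.2.1.le] at h1 h2
  exact ⟨h2, h1⟩

lemma IsLevelNeighbor.eq_or_eq_of_mem_segment (huv : IsLevelNeighbor ℓ x u v)
    (hy : layerPos ℓ x y ∈ [layerPos ℓ x u -[ℝ] layerPos ℓ x v]) : y = u ∨ y = v :=
  let ⟨hℓ, hx⟩ := huv.mem_segment hy
  huv.2.2 y (Nat.cast_injective hℓ) hx

lemma IsLevelNeighbor.right_unique (huv : IsLevelNeighbor ℓ x u v)
    (huz : IsLevelNeighbor ℓ x u z) : v = z := by
  wlog hle : x v ≤ x z generalizing v z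
  · exact (this huz huv (le_of_not_ge hle)).symm
  rcases huz.2.2 v huv.1.symm ⟨huv.2.1.le, hle⟩ with rfl | rfl
  · exact absurd huv.2.1 (lt_irrefl _)
  · rfl

lemma IsLevelNeighbor.eq_of_mem_segment_of_lt (huv : IsLevelNeighbor ℓ x u v)
    (hwz : IsLevelNeighbor ℓ x w z) (hℓ : ℓ u = ℓ w) (hlt : x u < x w)
    (hp₁ : p ∈ [layerPos ℓ x u -[ℝ] layerPos ℓ x v])
    (hp₂ : p ∈ [layerPos ℓ x w -[ℝ] layerPos ℓ x z]) : w = v ∧ p = layerPos ℓ x v := by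
  obtain ⟨-, hx₁⟩ := huv.mem_segment hp₁
  obtain ⟨hy₂, hx₂⟩ := hwz.mem_segment hp₂
  obtain rfl : w = v := (huv.2.2 w hℓ.symm ⟨hlt.le, hx₂.1.trans hx₁.2⟩).resolve_left
    (by rintro rfl; exact lt_irrefl _ hlt)
  exact ⟨rfl, Prod.ext (le_antisymm hx₁.2 hx₂.1) hy₂⟩

lemma IsLevelNeighbor.inter_segment_subset (hpos : Function.Injective (layerPos ℓ x))
    (huv : IsLevelNeighbor ℓ x u v) (hwz : IsLevelNeighbor ℓ x w z) (hne : s(u, v) ≠ s(w, z)) :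
    [layerPos ℓ x u -[ℝ] layerPos ℓ x v] ∩ [layerPos ℓ x w -[ℝ] layerPos ℓ x z] ⊆
      {layerPos ℓ x u, layerPos ℓ x v} ∩ {layerPos ℓ x w, layerPos ℓ x z} := by
  rintro p ⟨hp₁, hp₂⟩
  have hℓ : ℓ u = ℓ w := by
    exact_mod_cast (huv.mem_segment hp₁).1.symm.trans (hwz.mem_segment hp₂).1
  rcases lt_trichotomy (x u) (x w) with hlt | heq | hgt
  · obtain ⟨rfl, rfl⟩ := huv.eq_of_mem_segment_of_lt hwz hℓ hlt hp₁ hp₂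
    exact ⟨Or.inr rfl, Or.inl rfl⟩
  · obtain rfl := eq_of_layerPos hpos hℓ heq
    exact absurd (by rw [huv.right_unique hwz]) hne
  · obtain ⟨rfl, rfl⟩ := hwz.eq_of_mem_segment_of_lt huv hℓ.symm hgt hp₂ hp₁
    exact ⟨Or.inl rfl, Or.inr rfl⟩

lemma mem_segment_of_succ (huv : ℓ v = ℓ u + 1)
    (hp : p ∈ [layerPos ℓ x u -[ℝ] layerPos ℓ x v]) :
    p.2 ∈ Icc (ℓ u : ℝ) (ℓ u + 1) ∧ p.1 = x u + (p.2 - ℓ u) * (x v - x u) := by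
  rw [segment_eq_image_lineMap] at hp
  obtain ⟨t, ⟨ht₀, ht₁⟩, rfl⟩ := hp
  simp only [layerPos, AffineMap.lineMap_apply_module, huv, Prod.fst_add, Prod.snd_add,
    Prod.smul_fst, Prod.smul_snd, smul_eq_mul]
  push_cast
  exact ⟨⟨by nlinarith, by nlinarith⟩, by ring⟩

lemma mem_pair_of_succ (huv : ℓ v = ℓ u + 1) (hp : p ∈ [layerPos ℓ x u -[ℝ] layerPos ℓ x v])
    {n : ℕ} (hn : p.2 = n) : p ∈ ({layerPos ℓ x u, layerPos ℓ x v} : Set (ℝ × ℝ)) := by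
  obtain ⟨⟨h₀, h₁⟩, hx⟩ := mem_segment_of_succ huv hp
  rw [hn] at h₀ h₁ hx
  obtain rfl | rfl : n = ℓ u ∨ n = ℓ u + 1 := by
    have : ℓ u ≤ n := by exact_mod_cast h₀
    have : n ≤ ℓ u + 1 := by exact_mod_cast h₁
    omega
  · left
    ext <;> simp [layerPos, hx, hn]
  · right
    ext <;> simp [layerPos, hx, hn, huv]

lemma eq_or_eq_of_succ_of_mem_segment (hpos : Function.Injective (layerPos ℓ x))
    (huv : ℓ v = ℓ u + 1) (hy : layerPos ℓ x y ∈ [layerPos ℓ x u -[ℝ] layerPos ℓ x v]) :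
    y = u ∨ y = v :=
  (mem_pair_of_succ huv hy rfl).imp (hpos ·) (hpos ·)

lemma IsLevelNeighbor.inter_segment_subset_of_succ (huv : IsLevelNeighbor ℓ x u v)
    (hwz : ℓ z = ℓ w + 1) :
    [layerPos ℓ x u -[ℝ] layerPos ℓ x v] ∩ [layerPos ℓ x w -[ℝ] layerPos ℓ x z] ⊆
      {layerPos ℓ x u, layerPos ℓ x v} ∩ {layerPos ℓ x w, layerPos ℓ x z} := by
  rintro p ⟨hp₁, hp₂⟩
  have hp := mem_pair_of_succ hwz hp₂ (huv.mem_segment hp₁).1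
  refine ⟨?_, hp⟩
  rcases hp with rfl | rfl <;> rcases huv.eq_or_eq_of_mem_segment hp₁ with rfl | rfl <;> simp

lemma snd_eq_of_succ_of_lt (huv : ℓ v = ℓ u + 1) (hwz : ℓ z = ℓ w + 1) (hlt : ℓ u < ℓ w)
    (hp₁ : p ∈ [layerPos ℓ x u -[ℝ] layerPos ℓ x v])
    (hp₂ : p ∈ [layerPos ℓ x w -[ℝ] layerPos ℓ x z]) : p.2 = ℓ w := by
  obtain ⟨⟨-, h₁⟩, -⟩ := mem_segment_of_succ huv hp₁
  obtain ⟨⟨h₂, -⟩, -⟩ := mem_segment_of_succ hwz hp₂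
  have : (ℓ u : ℝ) + 1 ≤ ℓ w := by exact_mod_cast hlt
  linarith

lemma snd_eq_of_succ_of_eq (hpos : Function.Injective (layerPos ℓ x))
    (huv : ℓ v = ℓ u + 1) (hwz : ℓ z = ℓ w + 1) (hℓ : ℓ u = ℓ w) (hle : x u ≤ x w)
    (hcross : x u < x w → x v ≤ x z) (hne : s(u, v) ≠ s(w, z))
    (hp₁ : p ∈ [layerPos ℓ x u -[ℝ] layerPos ℓ x v])
    (hp₂ : p ∈ [layerPos ℓ x w -[ℝ] layerPos ℓ x z]) : p.2 = ℓ u ∨ p.2 = ℓ v := by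
  obtain ⟨⟨h₀, h₁⟩, hx₁⟩ := mem_segment_of_succ huv hp₁
  obtain ⟨-, hx₂⟩ := mem_segment_of_succ hwz hp₂
  rw [← hℓ] at hx₂
  rw [huv, Nat.cast_succ]
  rcases hle.lt_or_eq with hlt | heq
  · -- with `t = p.2 - ℓ u`, both summands of `(1 - t) (x w - x u) + t (x z - x v) = 0` are
    -- nonnegative, so `t = 1`
    have hvz := hcross hlt
    right
    nlinarith [mul_nonneg (sub_nonneg.2 h₁) (sub_nonneg.2 hvz)]
  · obtain rfl := eq_of_layerPos hpos hℓ heq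
    rcases mul_eq_zero.mp (by linarith : (p.2 - ℓ u) * (x v - x z) = 0) with h | h
    · exact Or.inl (by linarith)
    · obtain rfl : v = z := eq_of_layerPos hpos (huv.trans hwz.symm) (by linarith)
      exact absurd rfl hne

lemma inter_segment_subset_of_succ (hpos : Function.Injective (layerPos ℓ x))
    (huv : ℓ v = ℓ u + 1) (hwz : ℓ z = ℓ w + 1)
    (hcross : ℓ u = ℓ w → x u < x w → x v ≤ x z) (hcross' : ℓ u = ℓ w → x w < x u → x z ≤ x v)
    (hne : s(u, v) ≠ s(w, z)) :
    [layerPos ℓ x u -[ℝ] layerPos ℓ x v] ∩ [layerPos ℓ x w -[ℝ] layerPos ℓ x z] ⊆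
      {layerPos ℓ x u, layerPos ℓ x v} ∩ {layerPos ℓ x w, layerPos ℓ x z} := by
  rintro p ⟨hp₁, hp₂⟩
  suffices ∃ n : ℕ, p.2 = n from
    let ⟨_, hn⟩ := this
    ⟨mem_pair_of_succ huv hp₁ hn, mem_pair_of_succ hwz hp₂ hn⟩
  rcases lt_trichotomy (ℓ u) (ℓ w) with hlt | hℓ | hgt
  · exact ⟨_, snd_eq_of_succ_of_lt huv hwz hlt hp₁ hp₂⟩
  · rcases le_total (x u) (x w) with hle | hle
    · exact (snd_eq_of_succ_of_eq hpos huv hwz hℓ hle (hcross hℓ) hne hp₁ hp₂).elim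
        (⟨_, ·⟩) (⟨_, ·⟩)
    · exact (snd_eq_of_succ_of_eq hpos hwz huv hℓ.symm hle (hcross' hℓ) hne.symm hp₂ hp₁).elim
        (⟨_, ·⟩) (⟨_, ·⟩)
  · exact ⟨_, snd_eq_of_succ_of_lt hwz huv hgt hp₂ hp₁⟩

lemma IsLayerStep.eq_or_eq_of_mem_segment (hpos : Function.Injective (layerPos ℓ x))
    (huv : IsLayerStep ℓ x u v) (hy : layerPos ℓ x y ∈ [layerPos ℓ x u -[ℝ] layerPos ℓ x v]) :
    y = u ∨ y = v :=
  huv.elim (·.eq_or_eq_of_mem_segment hy) (eq_or_eq_of_succ_of_mem_segment hpos · hy)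

theorem _root_.SimpleGraph.isPlanar_of_layered (G : SimpleGraph V)
    (hpos : Function.Injective (layerPos ℓ x))
    (hstep : ∀ u v, G.Adj u v → IsLayerStep ℓ x u v ∨ IsLayerStep ℓ x v u)
    (hcross : ∀ u v w z, G.Adj u v → G.Adj w z → ℓ v = ℓ u + 1 → ℓ z = ℓ w + 1 →
      ℓ u = ℓ w → x u < x w → x v ≤ x z) :
    G.IsPlanar := by
  refine G.isPlanar_of_segments (fun u v => G.Adj u v ∧ IsLayerStep ℓ x u v)
    (fun u v huv => (hstep u v huv).imp (⟨huv, ·⟩) (⟨huv.symm, ·⟩)) _ hpos ?_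
    (fun u v y huv hy => huv.2.eq_or_eq_of_mem_segment hpos hy)
  rintro u v w z ⟨huv, h₁ | h₁⟩ ⟨hwz, h₂ | h₂⟩ hne
  · exact h₁.inter_segment_subset hpos h₂ hne
  · exact h₁.inter_segment_subset_of_succ h₂
  · rw [inter_comm, inter_comm {_, _}]
    exact h₂.inter_segment_subset_of_succ h₁
  · exact inter_segment_subset_of_succ hpos h₁ h₂ (hcross u v w z huv hwz h₁ h₂)
      (fun hℓ => hcross w z u v hwz huv h₂ h₁ hℓ.symm) hne

end LayeredDrawing

open LayeredDrawing

namespace VhatT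

variable {h k : ℕ}

abbrev depth (u : VhatT h k) : ℕ := u.1

abbrev offset (u : VhatT h k) : ℝ := (u.2 : ℕ)

lemma ext {u w : VhatT h k} (hd : u.depth = w.depth) (hi : (u.2 : ℕ) = w.2) : u = w := by
  obtain ⟨d, i⟩ := u
  obtain ⟨d', i'⟩ := w
  obtain rfl := Fin.ext hd
  obtain rfl := Fin.ext hi
  rfl

lemma layerPos_injective : Function.Injective (layerPos (depth (h := h) (k := k)) offset) := by
  intro u w he
  simp only [layerPos, Prod.mk.injEq, Nat.cast_inj] at he
  exact ext he.2 he.1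

lemma isLayerStep_of_hatStep {u v : VhatT h k} (huv : hatStep k u v) :
    IsLayerStep depth offset u v := by
  rcases huv with ⟨hd, hi⟩ | ⟨hd, -⟩
  · refine Or.inl ⟨hd, by simp only [offset]; exact_mod_cast (by omega : (u.2 : ℕ) < v.2),
      fun w hw hx => ?_⟩
    have h₁ : (u.2 : ℕ) ≤ w.2 := by exact_mod_cast hx.1
    have h₂ : (w.2 : ℕ) ≤ v.2 := by exact_mod_cast hx.2
    obtain hi' | hi' : (w.2 : ℕ) = u.2 ∨ (w.2 : ℕ) = v.2 := by omega
    exacts [Or.inl (ext hw hi'), Or.inr (ext (hw.trans hd) hi')]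
  · exact Or.inr hd.symm

-- An edge from depth `d` ending at index `i` starts at index `i / 2` or `i`, depending on `d`
-- only; either way this is monotone in `i`.
lemma offset_le_offset_of_adj {u v w z : VhatT h k} (huv : (hatT h k).Adj u v)
    (hwz : (hatT h k).Adj w z) (hv : v.depth = u.depth + 1) (hz : z.depth = w.depth + 1)
    (hℓ : u.depth = w.depth) (hlt : u.offset < w.offset) : v.offset ≤ z.offset := by
  have hlt' : (u.2 : ℕ) < w.2 := by exact_mod_cast hlt
  have hv' : (v.1 : ℕ) = w.1 + 1 := hv.trans (congrArg (· + 1) hℓ)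
  have hz' : (z.1 : ℕ) = w.1 + 1 := hz
  simp only [offset, Nat.cast_le]
  simp only [hatT, hatStep, show (u.1 : ℕ) = w.1 from hℓ] at huv hwz
  omega

end VhatT

open VhatT in
theorem hatT_isPlanar_general (h k : ℕ) : (hatT h k).IsPlanar :=
  (hatT h k).isPlanar_of_layered layerPos_injective
    (fun _ _ huv => huv.imp isLayerStep_of_hatStep isLayerStep_of_hatStep)
    fun _ _ _ _ => offset_le_offset_of_adj

/-- The graph `hatT h k` is planar. -/
theorem hatT_isPlanar (h k : ℕ) (hk : 1 ≤ k) : (hatT h k).IsPlanar :=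
  hatT_isPlanar_general h k
end
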